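/- Let A ∈ ℝ^{m×n}, let Q ∈ ℝ^{m×μ} be orthonormal (QᵀQ = I_μ), let q ≥ 0 be an integer, set B = (AAᵀ)^q A, and let R ∈ ℝ^{μ×ℓ}, Ω ∈ ℝ^{n×ℓ}, F ∈ ℝ^{ℓ×n} be arbitrary real matrices. Then the non-squared bound ‖A − QQᵀA‖_F ≤ 2‖BΩF − A‖_F + 2‖F‖₂ · ‖QR − BΩ‖_F holds. -/

import Mathlib

open Matrix
open scoped BigOperators

noncomputable section

/-- Frobenius norm of a real matrix. -/
def frobNorm {m n : ℕ} (A : Matrix (Fin m) (Fin n) ℝ) : ℝ :=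
  Real.sqrt (∑ i, ∑ j, A i j ^ 2)

/-- Nonincreasing rearrangement of a finite tuple of reals. -/
def sortedDesc {n : ℕ} (f : Fin n → ℝ) : Fin n → ℝ :=
  fun k => - ((fun i => - f i) ∘ Tuple.sort (fun i => - f i)) k

/-- `sval A k` is the `(k+1)`-st largest singular value of `A` (i.e. 0-based index `k`),
the square root of the `(k+1)`-st largest eigenvalue of `AᵀA`; it is `0` for `k ≥ n`
(in particular for `k ≥ min m n`). -/
def sval {m n : ℕ} (A : Matrix (Fin m) (Fin n) ℝ) (k : ℕ) : ℝ :=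
  if h : k < n then
    Real.sqrt (sortedDesc (show (Aᵀ * A).IsHermitian by simpa using Matrix.isHermitian_conjTranspose_mul_self A).eigenvalues ⟨k, h⟩)
  else 0

/-- Spectral norm (ℓ²→ℓ² operator norm) of a real matrix: its largest singular value. -/
def specNorm {m n : ℕ} (A : Matrix (Fin m) (Fin n) ℝ) : ℝ := sval A 0

/-- `tailDelta A μ = Δ_{μ+1}(A) = sqrt (Σ_{k=μ+1}^{min(m,n)} σ_k(A)²)` (with 1-based σ's,
so 0-based indices `μ, …, min m n - 1`). -/
def tailDelta {m n : ℕ} (A : Matrix (Fin m) (Fin n) ℝ) (μ : ℕ) : ℝ :=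
  Real.sqrt (∑ k ∈ Finset.Ico μ (min m n), sval A k ^ 2)

end

/-!
Put `P = I - QQᵀ`. Since `QᵀQ = I`, `P` kills the range of `Q` and is an orthogonal projection,
so `‖PM‖_F ≤ ‖M‖_F`. Hence `PA = P((BΩ - QR)F) - P(BΩF - A)` gives
`‖PA‖_F ≤ ‖(BΩ - QR)F‖_F + ‖BΩF - A‖_F`, and `‖MF‖_F ≤ ‖M‖_F ‖F‖₂` follows row by row from the
identification of `specNorm F` with the `ℓ²` operator norm: by the spectral theorem,
`‖F‖₂² = ‖FᵀF‖₂` is the largest eigenvalue of `FᵀF`.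
-/

section Frobenius

attribute [local instance] Matrix.frobeniusNormedAddCommGroup

variable {m n : ℕ}

lemma frobNorm_eq_norm (A : Matrix (Fin m) (Fin n) ℝ) : frobNorm A = ‖A‖ := by
  rw [frobenius_norm_def, frobNorm, Real.sqrt_eq_rpow]
  simp [Real.norm_eq_abs, sq_abs]

lemma frobNorm_nonneg (A : Matrix (Fin m) (Fin n) ℝ) : 0 ≤ frobNorm A := Real.sqrt_nonneg _

lemma frobNorm_sub_le (A B : Matrix (Fin m) (Fin n) ℝ) :
    frobNorm (A - B) ≤ frobNorm A + frobNorm B := by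
  simpa only [frobNorm_eq_norm] using norm_sub_le A B

lemma frobNorm_sub_comm (A B : Matrix (Fin m) (Fin n) ℝ) : frobNorm (A - B) = frobNorm (B - A) := by
  simpa only [frobNorm_eq_norm] using norm_sub_rev A B

end Frobenius

section SortedDesc

variable {n : ℕ}

lemma sortedDesc_eq_comp_sort (f : Fin n → ℝ) : sortedDesc f = f ∘ Tuple.sort (-f) := by
  funext k
  simp [sortedDesc, Pi.neg_def]

lemma antitone_sortedDesc (f : Fin n → ℝ) : Antitone (sortedDesc f) := by
  intro i j hij
  simpa [sortedDesc_eq_comp_sort] using Tuple.monotone_sort (-f) hij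

lemma sortedDesc_zero_eq_norm {f : Fin n → ℝ} (hf : 0 ≤ f) (hn : 0 < n) :
    sortedDesc f ⟨0, hn⟩ = ‖f‖ := by
  have hle (i : Fin n) : f i ≤ sortedDesc f ⟨0, hn⟩ := by
    have h0 : (⟨0, hn⟩ : Fin n) ≤ (Tuple.sort (-f)).symm i := Nat.zero_le _
    simpa [sortedDesc_eq_comp_sort] using antitone_sortedDesc f h0
  apply le_antisymm
  · rw [sortedDesc_eq_comp_sort, Function.comp_apply, ← Real.norm_of_nonneg (hf _)]
    exact norm_le_pi_norm f _
  · refine pi_norm_le_iff_of_nonneg ((hf _).trans (hle ⟨0, hn⟩)) |>.mpr fun i => ?_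
    rw [Real.norm_of_nonneg (hf i)]
    exact hle i

end SortedDesc

section L2OpNorm

open scoped Matrix.Norms.L2Operator

lemma Matrix.IsHermitian.l2_opNorm_eq_norm_eigenvalues {𝕜 n : Type*} [RCLike 𝕜] [Fintype n]
    [DecidableEq n] {A : Matrix n n 𝕜} (hA : A.IsHermitian) : ‖A‖ = ‖hA.eigenvalues‖ := by
  conv_lhs => rw [hA.spectral_theorem, Unitary.conjStarAlgAut_apply, ← Unitary.coe_star]
  rw [CStarRing.norm_mul_coe_unitary, CStarRing.norm_coe_unitary_mul, l2_opNorm_diagonal]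
  simp [Pi.norm_def, Function.comp_def]

variable {k m n : ℕ}

lemma specNorm_eq_l2_opNorm (F : Matrix (Fin m) (Fin n) ℝ) : specNorm F = ‖F‖ := by
  rcases Nat.eq_zero_or_pos n with rfl | hn
  · simp [specNorm, sval, Subsingleton.elim F 0]
  have hpsd : (Fᵀ * F).PosSemidef := by
    simpa using posSemidef_conjTranspose_mul_self F
  rw [specNorm, sval, dif_pos hn, sortedDesc_zero_eq_norm (fun i => hpsd.eigenvalues_nonneg i) hn,
    ← hpsd.1.l2_opNorm_eq_norm_eigenvalues, ← conjTranspose_eq_transpose_of_trivial,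
    l2_opNorm_conjTranspose_mul_self, Real.sqrt_mul_self (norm_nonneg F)]

lemma specNorm_nonneg (F : Matrix (Fin m) (Fin n) ℝ) : 0 ≤ specNorm F :=
  specNorm_eq_l2_opNorm F ▸ norm_nonneg F

lemma frobNorm_sq_eq_sum_norm_sq (A : Matrix (Fin m) (Fin n) ℝ) :
    frobNorm A ^ 2 = ∑ i, ‖WithLp.toLp 2 (A i)‖ ^ 2 := by
  rw [frobNorm, Real.sq_sqrt (by positivity)]
  simp [EuclideanSpace.norm_sq_eq]

lemma frobNorm_mul_le_mul_specNorm (M : Matrix (Fin k) (Fin m) ℝ) (F : Matrix (Fin m) (Fin n) ℝ) :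
    frobNorm (M * F) ≤ frobNorm M * specNorm F := by
  have hrow (i : Fin k) : ‖WithLp.toLp 2 ((M * F) i)‖ ≤ ‖F‖ * ‖WithLp.toLp 2 (M i)‖ := by
    have := l2_opNorm_mulVec Fᵀ (WithLp.toLp 2 (M i))
    rwa [← conjTranspose_eq_transpose_of_trivial, l2_opNorm_conjTranspose,
      conjTranspose_eq_transpose_of_trivial, mulVec_transpose] at this
  rw [specNorm_eq_l2_opNorm, ← sq_le_sq₀ (frobNorm_nonneg _) (by positivity [frobNorm_nonneg M]),
    mul_pow, frobNorm_sq_eq_sum_norm_sq, frobNorm_sq_eq_sum_norm_sq, Finset.sum_mul]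
  gcongr with i
  simpa only [mul_pow, mul_comm] using pow_le_pow_left₀ (norm_nonneg _) (hrow i) 2

end L2OpNorm

section OrthogonalProjection

variable {m n μ : ℕ} {Q : Matrix (Fin m) (Fin μ) ℝ}

lemma frobNorm_sq_eq_trace (A : Matrix (Fin m) (Fin n) ℝ) : frobNorm A ^ 2 = trace (Aᵀ * A) := by
  rw [frobNorm, Real.sq_sqrt (by positivity), trace, Finset.sum_comm]
  simp [mul_apply, sq]

lemma transpose_mul_mul_cancel (hQ : Qᵀ * Q = 1) (X : Matrix (Fin μ) (Fin n) ℝ) :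
    Qᵀ * (Q * X) = X := by
  rw [← Matrix.mul_assoc, hQ, Matrix.one_mul]

lemma frobNorm_sub_proj_sq_add (hQ : Qᵀ * Q = 1) (M : Matrix (Fin m) (Fin n) ℝ) :
    frobNorm (M - Q * Qᵀ * M) ^ 2 + frobNorm (Qᵀ * M) ^ 2 = frobNorm M ^ 2 := by
  have hgram : (M - Q * Qᵀ * M)ᵀ * (M - Q * Qᵀ * M) = Mᵀ * M - (Qᵀ * M)ᵀ * (Qᵀ * M) := by
    simp only [transpose_sub, transpose_mul, transpose_transpose, Matrix.sub_mul, Matrix.mul_sub,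
      Matrix.mul_assoc, transpose_mul_mul_cancel hQ]
    abel
  rw [frobNorm_sq_eq_trace, frobNorm_sq_eq_trace, frobNorm_sq_eq_trace, hgram, trace_sub]
  ring

lemma frobNorm_sub_proj_le (hQ : Qᵀ * Q = 1) (M : Matrix (Fin m) (Fin n) ℝ) :
    frobNorm (M - Q * Qᵀ * M) ≤ frobNorm M := by
  refine (sq_le_sq₀ (frobNorm_nonneg _) (frobNorm_nonneg _)).mp ?_
  linarith [frobNorm_sub_proj_sq_add hQ M, sq_nonneg (frobNorm (Qᵀ * M))]

end OrthogonalProjection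

theorem frob_proj_le_general {m n μ ℓ : ℕ}
    (A : Matrix (Fin m) (Fin n) ℝ)
    (Q : Matrix (Fin m) (Fin μ) ℝ) (hQ : Qᵀ * Q = 1)
    (B : Matrix (Fin m) (Fin n) ℝ)
    (R : Matrix (Fin μ) (Fin ℓ) ℝ) (Ω : Matrix (Fin n) (Fin ℓ) ℝ)
    (F : Matrix (Fin ℓ) (Fin n) ℝ) :
    frobNorm (A - Q * Qᵀ * A) ≤
      2 * frobNorm (B * Ω * F - A) + 2 * specNorm F * frobNorm (Q * R - B * Ω) := by
  set X := B * Ω * F - A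
  set Y := (B * Ω - Q * R) * F
  have hsplit : A - Q * Qᵀ * A = (Y - Q * Qᵀ * Y) - (X - Q * Qᵀ * X) := by
    simp only [X, Y, Matrix.mul_sub, Matrix.sub_mul, Matrix.mul_assoc, transpose_mul_mul_cancel hQ]
    abel
  have hY : frobNorm Y ≤ specNorm F * frobNorm (Q * R - B * Ω) := by
    rw [mul_comm, frobNorm_sub_comm]
    exact frobNorm_mul_le_mul_specNorm _ _
  calc frobNorm (A - Q * Qᵀ * A)
      ≤ frobNorm (Y - Q * Qᵀ * Y) + frobNorm (X - Q * Qᵀ * X) := hsplit ▸ frobNorm_sub_le _ _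
    _ ≤ frobNorm Y + frobNorm X := add_le_add (frobNorm_sub_proj_le hQ Y) (frobNorm_sub_proj_le hQ X)
    _ ≤ 2 * frobNorm X + 2 * specNorm F * frobNorm (Q * R - B * Ω) := by
      linarith [frobNorm_nonneg X, mul_nonneg (specNorm_nonneg F) (frobNorm_nonneg (Q * R - B * Ω))]

/-- For `B = (AAᵀ)^q A` and orthonormal `Q`, the non-squared bound
`‖A − QQᵀA‖_F ≤ 2‖BΩF − A‖_F + 2‖F‖₂‖QR − BΩ‖_F`. -/
theorem frob_proj_le {m n μ ℓ : ℕ} (hμm : μ ≤ m)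
    (A : Matrix (Fin m) (Fin n) ℝ)
    (Q : Matrix (Fin m) (Fin μ) ℝ) (hQ : Qᵀ * Q = 1)
    (q : ℕ) (B : Matrix (Fin m) (Fin n) ℝ) (hB : B = (A * Aᵀ) ^ q * A)
    (R : Matrix (Fin μ) (Fin ℓ) ℝ) (Ω : Matrix (Fin n) (Fin ℓ) ℝ)
    (F : Matrix (Fin ℓ) (Fin n) ℝ) :
    frobNorm (A - Q * Qᵀ * A) ≤
      2 * frobNorm (B * Ω * F - A) + 2 * specNorm F * frobNorm (Q * R - B * Ω) :=
  frob_proj_le_general A Q hQ B R Ω F
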